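/- Assume κ ≠ 0, let ν be real, and let m, n ≥ 0 be integers such that 2ν/κ + m − n + 1 + j ≠ 0 for all integers 0 ≤ j ≤ n−1. Define P_{m,n}^{ν;κ}(z) = (1+κ|z|²)^{ν/κ + m} · (∇_{ν+κ} ∘ ∇_{ν+2κ} ∘ ⋯ ∘ ∇_{ν+mκ})[w ↦ (1+κ|w|²)^{−(ν/κ+m)} w^n](z) on Ω = {z : 1+κ|z|² > 0} (the composition being the identity when m = 0). Then for every z ∈ Ω, P_{m,n}^{ν;κ}(z) = C · (1+κ|z|²)^{2(ν/κ+m)+1} · (∂^{m+n}/∂z^m∂z̄^n)[w ↦ (1+κ|w|²)^{−2(ν/κ+m)+m+n−1}](z), where C = (−1)^{m+n} / (κ^n · (2ν/κ + m − n + 1)_n) and (a)_n = a(a+1)⋯(a+n−1) is the Pochhammer symbol. -/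

import Mathlib

open Complex MeasureTheory Filter

/-- Wirtinger derivative ∂f/∂z = (1/2)(∂f/∂x − i ∂f/∂y). -/
noncomputable def wderiv (f : ℂ → ℂ) (z : ℂ) : ℂ :=
  (fderiv ℝ f z 1 - Complex.I * fderiv ℝ f z Complex.I) / 2

/-- Anti-holomorphic Wirtinger derivative ∂f/∂z̄ = (1/2)(∂f/∂x + i ∂f/∂y). -/
noncomputable def wderivBar (f : ℂ → ℂ) (z : ℂ) : ℂ :=
  (fderiv ℝ f z 1 + Complex.I * fderiv ℝ f z Complex.I) / 2

/-- Twisted Laplacian L_κ^ν. -/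
noncomputable def twistedLap (κ ν : ℝ) (f : ℂ → ℂ) (z : ℂ) : ℂ :=
  -(((1 + κ * Complex.normSq z : ℝ) : ℂ) ^ 2 * wderiv (wderivBar f) z
    + (ν : ℂ) * ((1 + κ * Complex.normSq z : ℝ) : ℂ) *
        (z * wderiv f z - (starRingEnd ℂ) z * wderivBar f z)
    - (ν : ℂ) ^ 2 * ((Complex.normSq z : ℝ) : ℂ) * f z)

/-- (∇_α f)(z) = −(1+κ|z|²) ∂f/∂z + α z̄ f(z). -/
noncomputable def nabla (κ α : ℝ) (f : ℂ → ℂ) (z : ℂ) : ℂ :=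
  -((1 + κ * Complex.normSq z : ℝ) : ℂ) * wderiv f z + (α : ℂ) * (starRingEnd ℂ) z * f z

/-- (∇*_α f)(z) = (1+κ|z|²) ∂f/∂z̄ + (α−κ) z f(z). -/
noncomputable def nablaStar (κ α : ℝ) (f : ℂ → ℂ) (z : ℂ) : ℂ :=
  ((1 + κ * Complex.normSq z : ℝ) : ℂ) * wderivBar f z + ((α - κ : ℝ) : ℂ) * z * f z

/-- ∇_{ν+κ} ∘ ∇_{ν+2κ} ∘ ⋯ ∘ ∇_{ν+mκ} (the identity when m = 0). -/
noncomputable def nablaChain (κ : ℝ) : ℕ → ℝ → (ℂ → ℂ) → (ℂ → ℂ)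
  | 0, _, f => f
  | m + 1, ν, f => nabla κ (ν + κ) (nablaChain κ m (ν + κ) f)

/-- (D g)(z) = (1+κ|z|²)² ∂g/∂z. -/
noncomputable def Dop (κ : ℝ) (g : ℂ → ℂ) (z : ℂ) : ℂ :=
  ((1 + κ * Complex.normSq z : ℝ) : ℂ) ^ 2 * wderiv g z

/-- Generalized binomial coefficient C(r,k) for real r. -/
noncomputable def genBinom (r : ℝ) (k : ℕ) : ℝ :=
  (∏ i ∈ Finset.range k, (r - i)) / (Nat.factorial k)

/-- Jacobi polynomial P_j^{(a,b)}(x) with real parameters a, b. -/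
noncomputable def jacobiP (a b : ℝ) (j : ℕ) (x : ℝ) : ℝ :=
  ∑ s ∈ Finset.range (j + 1),
    genBinom ((j : ℝ) + a) (j - s) * genBinom ((j : ℝ) + b) s *
      ((x - 1) / 2) ^ s * ((x + 1) / 2) ^ (j - s)

/-- Pochhammer symbol (a)_n = a(a+1)⋯(a+n−1). -/
noncomputable def risingFactorial (a : ℝ) (n : ℕ) : ℝ :=
  ∏ i ∈ Finset.range n, (a + i)

/-!
Write `u = 1 + κ|z|²`. Two identities drive the computation. Conjugating by a power of the
weight shifts the parameter, `∇_α (u^s h) = u^s ∇_{α - sκ} h`; and since `∂u = κ z̄` and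
`∂ z̄ = 0`, Leibniz's rule collapses to `∇_{-(j+1)κ} (∂^j g) = -∂^{j+1} (u g)`. By induction on
`m` they give `∇_{ν+κ} ∘ ⋯ ∘ ∇_{ν+mκ} (u^{-t} f) = (-1)^m u^{t+1} ∂^m (f u^{-2t+m-1})` whenever
`ν + mκ = κt`. On the other side `∂̄^n u^γ = κ^n γ(γ-1)⋯(γ-n+1) z^n u^{γ-n}`, so with `f = z^n`
and `t = ν/κ + m` both sides are multiples of `∂^m (z^n u^{-2t+m-1})`, and the Pochhammer
hypothesis makes the constant invertible. All functions involved are smooth on the open set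
`Ω = {u > 0}`, so every identity there may be differentiated again.
-/

open Set ComplexConjugate Topology
open scoped ContDiff

section Wirtinger

variable {f g : ℂ → ℂ} {z : ℂ}

theorem wderiv_of_hasDerivAt {f' : ℂ} (h : HasDerivAt f f' z) : wderiv f z = f' := by
  simp only [wderiv, (h.hasFDerivAt.restrictScalars ℝ).fderiv,
    ContinuousLinearMap.coe_restrictScalars', ContinuousLinearMap.toSpanSingleton_apply,
    smul_eq_mul]
  linear_combination (-f' / 2) * I_sq

theorem wderivBar_of_hasDerivAt {f' : ℂ} (h : HasDerivAt f f' z) : wderivBar f z = 0 := by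
  simp only [wderivBar, (h.hasFDerivAt.restrictScalars ℝ).fderiv,
    ContinuousLinearMap.coe_restrictScalars', ContinuousLinearMap.toSpanSingleton_apply,
    smul_eq_mul]
  linear_combination (f' / 2) * I_sq

theorem hasFDerivAt_conj : HasFDerivAt (fun w => conj w) (conjCLE : ℂ →L[ℝ] ℂ) z :=
  conjCLE.hasFDerivAt

theorem wderiv_conj : wderiv (fun w => conj w) z = 0 := by
  simp only [wderiv, hasFDerivAt_conj.fderiv, ContinuousLinearEquiv.coe_coe, conjCLE_apply,
    map_one, conj_I]
  linear_combination (1 / 2 : ℂ) * I_sq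

theorem wderivBar_conj : wderivBar (fun w => conj w) z = 1 := by
  simp only [wderivBar, hasFDerivAt_conj.fderiv, ContinuousLinearEquiv.coe_coe, conjCLE_apply,
    map_one, conj_I]
  linear_combination (-1 / 2 : ℂ) * I_sq

theorem wderiv_add (hf : DifferentiableAt ℝ f z) (hg : DifferentiableAt ℝ g z) :
    wderiv (fun w => f w + g w) z = wderiv f z + wderiv g z := by
  simp only [wderiv, fderiv_fun_add hf hg, add_apply]
  ring

theorem wderivBar_add (hf : DifferentiableAt ℝ f z) (hg : DifferentiableAt ℝ g z) :
    wderivBar (fun w => f w + g w) z = wderivBar f z + wderivBar g z := by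
  simp only [wderivBar, fderiv_fun_add hf hg, add_apply]
  ring

theorem wderiv_mul (hf : DifferentiableAt ℝ f z) (hg : DifferentiableAt ℝ g z) :
    wderiv (fun w => f w * g w) z = wderiv f z * g z + f z * wderiv g z := by
  simp only [wderiv, fderiv_fun_mul hf hg, add_apply, smul_apply, smul_eq_mul]
  ring

theorem wderivBar_mul (hf : DifferentiableAt ℝ f z) (hg : DifferentiableAt ℝ g z) :
    wderivBar (fun w => f w * g w) z = wderivBar f z * g z + f z * wderivBar g z := by
  simp only [wderivBar, fderiv_fun_mul hf hg, add_apply, smul_apply, smul_eq_mul]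
  ring

theorem wderiv_const_mul (c : ℂ) (hf : DifferentiableAt ℝ f z) :
    wderiv (fun w => c * f w) z = c * wderiv f z := by
  rw [wderiv_mul (differentiableAt_const c) hf, wderiv_of_hasDerivAt (hasDerivAt_const z c)]
  ring

theorem wderivBar_const_mul (c : ℂ) (hf : DifferentiableAt ℝ f z) :
    wderivBar (fun w => c * f w) z = c * wderivBar f z := by
  rw [wderivBar_mul (differentiableAt_const c) hf, wderivBar_of_hasDerivAt (hasDerivAt_const z c)]
  ring

section OfRealComp

variable {φ : ℝ → ℝ} {h : ℂ → ℝ} {φ' : ℝ}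

theorem hasFDerivAt_ofReal_comp (hφ : HasDerivAt φ φ' (h z)) (hh : DifferentiableAt ℝ h z) :
    HasFDerivAt (fun w => (φ (h w) : ℂ)) (ofRealCLM.comp (φ' • fderiv ℝ h z)) z :=
  ofRealCLM.hasFDerivAt.comp z (hφ.comp_hasFDerivAt z hh.hasFDerivAt)

theorem wderiv_ofReal_comp (hφ : HasDerivAt φ φ' (h z)) (hh : DifferentiableAt ℝ h z) :
    wderiv (fun w => (φ (h w) : ℂ)) z = φ' * wderiv (fun w => (h w : ℂ)) z := by
  have hh' : HasFDerivAt (fun w => (h w : ℂ)) (ofRealCLM.comp (fderiv ℝ h z)) z :=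
    ofRealCLM.hasFDerivAt.comp z hh.hasFDerivAt
  simp only [wderiv, (hasFDerivAt_ofReal_comp hφ hh).fderiv, hh'.fderiv,
    ContinuousLinearMap.coe_comp, Function.comp_apply, smul_apply, smul_eq_mul, ofRealCLM_apply,
    ofReal_mul]
  ring

theorem wderivBar_ofReal_comp (hφ : HasDerivAt φ φ' (h z)) (hh : DifferentiableAt ℝ h z) :
    wderivBar (fun w => (φ (h w) : ℂ)) z = φ' * wderivBar (fun w => (h w : ℂ)) z := by
  have hh' : HasFDerivAt (fun w => (h w : ℂ)) (ofRealCLM.comp (fderiv ℝ h z)) z :=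
    ofRealCLM.hasFDerivAt.comp z hh.hasFDerivAt
  simp only [wderivBar, (hasFDerivAt_ofReal_comp hφ hh).fderiv, hh'.fderiv,
    ContinuousLinearMap.coe_comp, Function.comp_apply, smul_apply, smul_eq_mul, ofRealCLM_apply,
    ofReal_mul]
  ring

end OfRealComp

theorem Filter.EventuallyEq.wderiv_eq (h : f =ᶠ[𝓝 z] g) : wderiv f z = wderiv g z := by
  rw [wderiv, wderiv, h.fderiv_eq]

theorem Filter.EventuallyEq.wderivBar_eq (h : f =ᶠ[𝓝 z] g) : wderivBar f z = wderivBar g z := by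
  rw [wderivBar, wderivBar, h.fderiv_eq]

variable {s : Set ℂ}

theorem Set.EqOn.wderiv (h : EqOn f g s) (hs : IsOpen s) : EqOn (wderiv f) (wderiv g) s :=
  fun _ hz => (Filter.eventuallyEq_of_mem (hs.mem_nhds hz) h).wderiv_eq

theorem Set.EqOn.wderivBar (h : EqOn f g s) (hs : IsOpen s) :
    EqOn (wderivBar f) (wderivBar g) s :=
  fun _ hz => (Filter.eventuallyEq_of_mem (hs.mem_nhds hz) h).wderivBar_eq

theorem Set.EqOn.iterate_wderiv (h : EqOn f g s) (hs : IsOpen s) (m : ℕ) :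
    EqOn (_root_.wderiv^[m] f) (_root_.wderiv^[m] g) s := by
  induction m with
  | zero => exact h
  | succ m ih => simpa only [Function.iterate_succ_apply'] using ih.wderiv hs

theorem ContDiffOn.wderiv (hf : ContDiffOn ℝ ∞ f s) (hs : IsOpen s) :
    ContDiffOn ℝ ∞ (wderiv f) s := by
  have hD := hf.fderiv_of_isOpen hs (m := ∞) (by simp)
  exact (((hD.clm_apply contDiffOn_const).sub
    (contDiffOn_const.mul (hD.clm_apply contDiffOn_const))).div_const 2)

theorem ContDiffOn.iterate_wderiv (hf : ContDiffOn ℝ ∞ f s) (hs : IsOpen s) (m : ℕ) :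
    ContDiffOn ℝ ∞ (_root_.wderiv^[m] f) s := by
  induction m with
  | zero => exact hf
  | succ m ih => simpa only [Function.iterate_succ_apply'] using ih.wderiv hs

theorem ContDiffOn.differentiableAt_iterate_wderiv (hf : ContDiffOn ℝ ∞ f s) (hs : IsOpen s)
    (m : ℕ) (hz : z ∈ s) : DifferentiableAt ℝ (_root_.wderiv^[m] f) z :=
  ((hf.iterate_wderiv hs m).contDiffAt (hs.mem_nhds hz)).differentiableAt (by simp)

theorem iterate_wderiv_const_mul (hs : IsOpen s) (hf : ContDiffOn ℝ ∞ f s) (c : ℂ) (m : ℕ) :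
    EqOn (wderiv^[m] (fun w => c * f w)) (fun z => c * wderiv^[m] f z) s := by
  induction m with
  | zero => exact fun _ _ => rfl
  | succ m ih =>
    intro z hz
    rw [Function.iterate_succ_apply', ih.wderiv hs hz,
      wderiv_const_mul c (hf.differentiableAt_iterate_wderiv hs m hz),
      Function.iterate_succ_apply']

end Wirtinger

def weight (κ : ℝ) (z : ℂ) : ℝ := 1 + κ * normSq z

def Ω (κ : ℝ) : Set ℂ := {z | 0 < weight κ z}

section Weight

variable {κ : ℝ} {z : ℂ}

theorem contDiff_weight : ContDiff ℝ ∞ (weight κ) := by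
  have : weight κ = fun w => 1 + κ * ‖w‖ ^ 2 := by
    funext w; rw [weight, normSq_eq_norm_sq]
  rw [this]
  exact contDiff_const.add (contDiff_const.mul (contDiff_norm_sq ℝ))

theorem isOpen_Ω (κ : ℝ) : IsOpen (Ω κ) :=
  isOpen_lt continuous_const contDiff_weight.continuous

theorem ofReal_weight (w : ℂ) : (weight κ w : ℂ) = 1 + κ * (w * conj w) := by
  rw [weight, mul_conj]; push_cast; ring

theorem differentiableAt_ofReal_weight : DifferentiableAt ℝ (fun w => (weight κ w : ℂ)) z :=
  ofRealCLM.differentiableAt.comp z (contDiff_weight.differentiable (by simp) z)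

theorem wderiv_weight : wderiv (fun w => (weight κ w : ℂ)) z = κ * conj z := by
  have hid : DifferentiableAt ℝ (fun w : ℂ => w) z := differentiableAt_id
  have hconj : DifferentiableAt ℝ (fun w => conj w) z := hasFDerivAt_conj.differentiableAt
  simp only [ofReal_weight]
  rw [wderiv_add (differentiableAt_const _) ((hid.fun_mul hconj).const_mul _),
    wderiv_const_mul _ (hid.fun_mul hconj), wderiv_mul hid hconj,
    wderiv_of_hasDerivAt (hasDerivAt_const z 1), wderiv_of_hasDerivAt (hasDerivAt_id' z),
    wderiv_conj]
  ring

theorem wderivBar_weight : wderivBar (fun w => (weight κ w : ℂ)) z = κ * z := by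
  have hid : DifferentiableAt ℝ (fun w : ℂ => w) z := differentiableAt_id
  have hconj : DifferentiableAt ℝ (fun w => conj w) z := hasFDerivAt_conj.differentiableAt
  simp only [ofReal_weight]
  rw [wderivBar_add (differentiableAt_const _) ((hid.fun_mul hconj).const_mul _),
    wderivBar_const_mul _ (hid.fun_mul hconj), wderivBar_mul hid hconj,
    wderivBar_of_hasDerivAt (hasDerivAt_const z 1), wderivBar_of_hasDerivAt (hasDerivAt_id' z),
    wderivBar_conj]
  ring

theorem wderiv_weight_rpow (hz : z ∈ Ω κ) (c : ℝ) :
    wderiv (fun w => ((weight κ w ^ c : ℝ) : ℂ)) z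
      = c * κ * conj z * ((weight κ z ^ (c - 1) : ℝ) : ℂ) := by
  rw [wderiv_ofReal_comp (Real.hasDerivAt_rpow_const (Or.inl hz.ne'))
    (contDiff_weight.differentiable (by simp) z), wderiv_weight]
  push_cast
  ring

theorem wderivBar_weight_rpow (hz : z ∈ Ω κ) (c : ℝ) :
    wderivBar (fun w => ((weight κ w ^ c : ℝ) : ℂ)) z
      = c * κ * z * ((weight κ z ^ (c - 1) : ℝ) : ℂ) := by
  rw [wderivBar_ofReal_comp (Real.hasDerivAt_rpow_const (Or.inl hz.ne'))
    (contDiff_weight.differentiable (by simp) z), wderivBar_weight]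
  push_cast
  ring

theorem contDiffOn_weight_rpow (c : ℝ) :
    ContDiffOn ℝ ∞ (fun w => ((weight κ w ^ c : ℝ) : ℂ)) (Ω κ) :=
  ofRealCLM.contDiff.comp_contDiffOn
    (contDiff_weight.contDiffOn.rpow_const_of_ne fun _ hw => (hw : 0 < weight κ _).ne')

theorem ofReal_weight_rpow_mul (hz : z ∈ Ω κ) (a b : ℝ) :
    ((weight κ z ^ a : ℝ) : ℂ) * ((weight κ z ^ b : ℝ) : ℂ) = ((weight κ z ^ (a + b) : ℝ) : ℂ) := by
  rw [← ofReal_mul, Real.rpow_add hz]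

theorem iterate_wderivBar_weight_rpow (γ : ℝ) (n : ℕ) :
    EqOn (wderivBar^[n] (fun w => ((weight κ w ^ γ : ℝ) : ℂ)))
      (fun z => ((κ ^ n * ∏ i ∈ Finset.range n, (γ - i) : ℝ) : ℂ) *
        (z ^ n * ((weight κ z ^ (γ - n) : ℝ) : ℂ))) (Ω κ) := by
  induction n with
  | zero => intro z _; simp
  | succ n ih =>
    intro z hz
    have hpow : DifferentiableAt ℝ (fun w : ℂ => w ^ n) z :=
      (hasDerivAt_pow n z).differentiableAt.restrictScalars ℝ
    have hu : DifferentiableAt ℝ (fun w => ((weight κ w ^ (γ - n) : ℝ) : ℂ)) z :=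
      ((contDiffOn_weight_rpow _).contDiffAt ((isOpen_Ω κ).mem_nhds hz)).differentiableAt
        (by simp)
    rw [Function.iterate_succ_apply', ih.wderivBar (isOpen_Ω κ) hz,
      wderivBar_const_mul _ (hpow.fun_mul hu), wderivBar_mul hpow hu,
      wderivBar_of_hasDerivAt (hasDerivAt_pow n z), wderivBar_weight_rpow hz,
      Finset.prod_range_succ, sub_sub]
    push_cast
    ring

theorem iterate_wderiv_weight_mul {s : Set ℂ} {g : ℂ → ℂ} (hs : IsOpen s)
    (hg : ContDiffOn ℝ ∞ g s) (j : ℕ) :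
    EqOn (wderiv^[j + 1] (fun w => (weight κ w : ℂ) * g w))
      (fun z => weight κ z * wderiv^[j + 1] g z + (j + 1) * κ * conj z * wderiv^[j] g z) s := by
  have hd : ∀ i, ∀ z ∈ s, DifferentiableAt ℝ (wderiv^[i] g) z :=
    fun i _ hz => hg.differentiableAt_iterate_wderiv hs i hz
  induction j with
  | zero =>
    intro z hz
    simp only [zero_add, Function.iterate_one, Function.iterate_zero, id]
    rw [wderiv_mul (g := g) differentiableAt_ofReal_weight (hd 0 z hz), wderiv_weight]
    push_cast
    ring
  | succ j ih =>
    intro z hz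
    have hconj : DifferentiableAt ℝ (fun w => ((j : ℂ) + 1) * κ * conj w) z :=
      hasFDerivAt_conj.differentiableAt.const_mul _
    rw [Function.iterate_succ_apply', ih.wderiv hs hz,
      wderiv_add (differentiableAt_ofReal_weight.fun_mul (hd _ z hz)) (hconj.fun_mul (hd _ z hz)),
      wderiv_mul differentiableAt_ofReal_weight (hd _ z hz), wderiv_mul hconj (hd _ z hz),
      wderiv_const_mul _ hasFDerivAt_conj.differentiableAt, wderiv_conj, wderiv_weight,
      Function.iterate_succ_apply' _ (j + 1), Function.iterate_succ_apply' _ j]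
    push_cast
    ring

end Weight

section Nabla

variable {κ α : ℝ} {f g : ℂ → ℂ} {s : Set ℂ} {z : ℂ}

theorem nabla_apply :
    nabla κ α f z = -(weight κ z : ℂ) * wderiv f z + α * conj z * f z := rfl

theorem Set.EqOn.nabla (hfg : EqOn f g s) (hs : IsOpen s) :
    EqOn (_root_.nabla κ α f) (_root_.nabla κ α g) s := by
  intro z hz
  rw [nabla_apply, nabla_apply, hfg.wderiv hs hz, hfg hz]

theorem nabla_const_mul (c : ℂ) (hf : DifferentiableAt ℝ f z) :
    nabla κ α (fun w => c * f w) z = c * nabla κ α f z := by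
  rw [nabla_apply, nabla_apply, wderiv_const_mul c hf]
  ring

theorem nabla_weight_rpow_mul (hz : z ∈ Ω κ) (t : ℝ) (hf : DifferentiableAt ℝ f z) :
    nabla κ α (fun w => ((weight κ w ^ t : ℝ) : ℂ) * f w) z
      = ((weight κ z ^ t : ℝ) : ℂ) * nabla κ (α - t * κ) f z := by
  have hu : DifferentiableAt ℝ (fun w => ((weight κ w ^ t : ℝ) : ℂ)) z :=
    ((contDiffOn_weight_rpow t).contDiffAt ((isOpen_Ω κ).mem_nhds hz)).differentiableAt
      (by simp)
  have hw : (weight κ z : ℂ) ≠ 0 := ofReal_ne_zero.mpr hz.ne'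
  rw [nabla_apply, nabla_apply, wderiv_mul hu hf, wderiv_weight_rpow hz, Real.rpow_sub_one hz.ne']
  push_cast
  field_simp
  ring

theorem nabla_iterate_wderiv (hs : IsOpen s) (hg : ContDiffOn ℝ ∞ g s) (j : ℕ) (hz : z ∈ s) :
    nabla κ (-((j + 1) * κ)) (wderiv^[j] g) z
      = -wderiv^[j + 1] (fun w => (weight κ w : ℂ) * g w) z := by
  rw [nabla_apply, ← Function.iterate_succ_apply' wderiv, iterate_wderiv_weight_mul hs hg j hz]
  push_cast
  ring

theorem nablaChain_weight_rpow_mul (hf : ContDiffOn ℝ ∞ f (Ω κ)) (m : ℕ) (ν t : ℝ)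
    (ht : ν + m * κ = κ * t) :
    EqOn (nablaChain κ m ν (fun w => ((weight κ w ^ (-t) : ℝ) : ℂ) * f w))
      (fun z => ((weight κ z ^ (t + 1) : ℝ) : ℂ) *
        ((-1) ^ m * wderiv^[m] (fun w => f w * ((weight κ w ^ (-2 * t + m - 1) : ℝ) : ℂ)) z))
      (Ω κ) := by
  induction m generalizing ν with
  | zero =>
    intro z hz
    simp only [nablaChain, pow_zero, one_mul, Function.iterate_zero, id, Nat.cast_zero, add_zero]
    rw [mul_left_comm, ofReal_weight_rpow_mul hz]
    ring_nf
  | succ m ih =>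
    intro z hz
    set G := wderiv^[m] (fun w => f w * ((weight κ w ^ (-2 * t + m - 1) : ℝ) : ℂ))
    have hG : ContDiffOn ℝ ∞ (fun w => f w * ((weight κ w ^ (-2 * t + m - 1) : ℝ) : ℂ)) (Ω κ) :=
      hf.mul (contDiffOn_weight_rpow _)
    have hGz : DifferentiableAt ℝ G z := hG.differentiableAt_iterate_wderiv (isOpen_Ω κ) m hz
    have hshift : EqOn (fun w => (weight κ w : ℂ) *
          (f w * ((weight κ w ^ (-2 * t + m - 1) : ℝ) : ℂ)))
        (fun w => f w * ((weight κ w ^ (-2 * t + (m + 1 : ℕ) - 1) : ℝ) : ℂ)) (Ω κ) := by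
      intro w hw
      have hexp : -2 * t + ((m + 1 : ℕ) : ℝ) - 1 = (-2 * t + m - 1) + 1 := by push_cast; ring
      simp only [hexp, Real.rpow_add_one (hw : 0 < weight κ w).ne', ofReal_mul]
      ring
    calc nablaChain κ (m + 1) ν (fun w => ((weight κ w ^ (-t) : ℝ) : ℂ) * f w) z
        = nabla κ (ν + κ) (nablaChain κ m (ν + κ)
            (fun w => ((weight κ w ^ (-t) : ℝ) : ℂ) * f w)) z := rfl
      _ = nabla κ (ν + κ) (fun w => ((weight κ w ^ (t + 1) : ℝ) : ℂ) * ((-1) ^ m * G w)) z :=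
        (ih (ν + κ) (by push_cast at ht; linarith)).nabla (isOpen_Ω κ) hz
      _ = ((weight κ z ^ (t + 1) : ℝ) : ℂ) * ((-1) ^ m * nabla κ (-((m + 1) * κ)) G z) := by
        rw [nabla_weight_rpow_mul hz _ (hGz.const_mul _), nabla_const_mul _ hGz]
        push_cast at ht
        congr 3
        linarith
      _ = _ := by
        rw [nabla_iterate_wderiv (isOpen_Ω κ) hG m hz,
          hshift.iterate_wderiv (isOpen_Ω κ) (m + 1) hz]
        ring

end Nabla

theorem prod_range_neg_sub (a : ℝ) (n : ℕ) :
    ∏ i ∈ Finset.range n, (-a - i) = (-1) ^ n * risingFactorial a n := by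
  have h := Finset.prod_neg (s := Finset.range n) fun i : ℕ => a + i
  rw [Finset.card_range] at h
  rw [risingFactorial, ← h]
  exact Finset.prod_congr rfl fun _ _ => by ring

theorem risingFactorial_ne_zero {a : ℝ} {n : ℕ} (h : ∀ j : ℕ, j < n → a + j ≠ 0) :
    risingFactorial a n ≠ 0 :=
  Finset.prod_ne_zero_iff.mpr fun j hj => h j (Finset.mem_range.mp hj)

theorem stmt10 (κ : ℝ) (hκ : κ ≠ 0) (ν : ℝ) (m n : ℕ)
    (hpoch : ∀ j : ℕ, j < n → 2 * ν / κ + (m : ℝ) - (n : ℝ) + 1 + (j : ℝ) ≠ 0)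
    (z : ℂ) (hz : 0 < 1 + κ * Complex.normSq z) :
    (((1 + κ * Complex.normSq z) ^ (ν / κ + m) : ℝ) : ℂ) *
        nablaChain κ m ν
          (fun w => (((1 + κ * Complex.normSq w) ^ (-(ν / κ + m)) : ℝ) : ℂ) * w ^ n) z
      = ((-1 : ℂ) ^ (m + n) /
            ((κ ^ n * risingFactorial (2 * ν / κ + (m : ℝ) - (n : ℝ) + 1) n : ℝ) : ℂ)) *
          (((1 + κ * Complex.normSq z) ^ (2 * (ν / κ + m) + 1) : ℝ) : ℂ) *
          wderiv^[m] (wderivBar^[n]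
            (fun w =>
              (((1 + κ * Complex.normSq w) ^ (-(2 * (ν / κ + m)) + m + n - 1) : ℝ) : ℂ))) z := by
  set t := ν / κ + m with ht
  set a := 2 * ν / κ + (m : ℝ) - (n : ℝ) + 1
  have hpow : ContDiffOn ℝ ∞ (fun w : ℂ => w ^ n) (Ω κ) :=
    ((contDiff_id.pow n).restrict_scalars ℝ (𝕜' := ℂ)).contDiffOn
  have hchain := nablaChain_weight_rpow_mul hpow m ν t (by rw [ht]; field_simp) hz
  have hbar := ((iterate_wderivBar_weight_rpow (-(2 * t) + m + n - 1) n).iterate_wderiv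
    (isOpen_Ω κ) m).trans
      (iterate_wderiv_const_mul (isOpen_Ω κ) (hpow.mul (contDiffOn_weight_rpow _)) _ m) hz
  have hU := ofReal_weight_rpow_mul hz t (t + 1)
  have hexp : -(2 * t) + m + n - 1 - n = -2 * t + m - 1 := by ring
  have hprod : ∏ i ∈ Finset.range n, (-(2 * t) + m + n - 1 - i : ℝ)
      = (-1) ^ n * risingFactorial a n := by
    rw [← prod_range_neg_sub]; congr! 2; ring
  have hsign : (-1 : ℂ) ^ (m + n) * (-1) ^ n = (-1) ^ m := by
    rw [pow_add, mul_assoc, ← mul_pow]; norm_num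
  have hκR : ((κ ^ n * risingFactorial a n : ℝ) : ℂ) ≠ 0 := by
    exact_mod_cast mul_ne_zero (pow_ne_zero n hκ) (risingFactorial_ne_zero hpoch)
  rw [show t + (t + 1) = 2 * t + 1 by ring] at hU
  simp only [weight, hexp, hprod] at hchain hbar hU
  rw [hchain, hbar, ← hU, ← hsign]
  field_simp
  push_cast
  ring
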